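/- arXiv:2507.11855 — 2 statements merged into one kernel-verified Lean document; each statement's English description precedes it below -/
import Mathlib

section
/- Let N = {1,...,d} and let ω be a real-valued function on ordered coalitions (pairs (S, π) with S ⊆ N and π an ordering of S). Define the Sanchez-Bergantiños value φ^SB_i(ω) = Σ_{S ⊆ N\{i}} Σ_{π ∈ Ord(S)} Σ_{k=1}^{|S|+1} [(d−|S|−1)! / (d! · (|S|+1))] · [ω(π with i inserted at position k) − ω(π)]. Define the averaged characteristic function ν̄(S) = (1/|S|!) Σ_{π ∈ Ord(S)} ω(π) for all S ⊆ N. Then φ^SB_i(ω) equals the Shapley value of player i in the game (N, ν̄), i.e., φ^SB_i(ω) = Σ_{S ⊆ N\{i}} [(d−|S|−1)! · |S|! / d!] · [ν̄(S ∪ {i}) − ν̄(S)]. -/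
/-!
Inserting a new player `i` at each of the `|S| + 1` positions of each ordering of `S` runs
through every ordering of `S ∪ {i}` exactly once (the position is recovered as the index of `i`,
the ordering of `S` by erasing `i`). Hence, for fixed `S`, the SB marginal contributions sum to
`(|S| + 1)! ν̄(S ∪ {i}) - (|S| + 1) |S|! ν̄(S) = (|S| + 1)! (ν̄(S ∪ {i}) - ν̄(S))`, and the SB weight
`(d - |S| - 1)! / (d! (|S| + 1))` turns this into the Shapley term.
-/

open Finset Nat

/-- The set of orderings of a finite set `S`: lists that enumerate `S` without repetition. -/
def Orderings (S : Finset ℕ) : Finset (List ℕ) := (S.sort (· ≤ ·)).permutations.toFinset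

/-- The Sanchez-Bergantiños value of player `i` for a payoff `ω` on ordered coalitions
of `N = {1,…,d}` (insertion positions are 1-indexed). -/
noncomputable def SBvalue (d : ℕ) (ω : List ℕ → ℝ) (i : ℕ) : ℝ :=
  ∑ S ∈ ((Finset.Icc 1 d).erase i).powerset, ∑ π ∈ Orderings S,
    ∑ k ∈ Finset.Icc 1 (S.card + 1),
      (((d - S.card - 1)! : ℝ) / (d ! * (S.card + 1))) * (ω (π.insertIdx (k - 1) i) - ω π)

/-- The averaged characteristic function `ν̄(S) = (1/|S|!) Σ_{π ∈ Ord(S)} ω(π)`. -/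
noncomputable def avgGame (ω : List ℕ → ℝ) (S : Finset ℕ) : ℝ :=
  (1 / (S.card ! : ℝ)) * ∑ π ∈ Orderings S, ω π

namespace List

variable {α : Type*} [DecidableEq α]

theorem idxOf_insertIdx_of_notMem {l : List α} {a : α} (ha : a ∉ l) {n : ℕ}
    (hn : n ≤ l.length) : (l.insertIdx n a).idxOf a = n := by
  induction l generalizing n with
  | nil => simp_all
  | cons b l ih =>
    rw [mem_cons, not_or] at ha
    cases n with
    | zero => simp
    | succ n =>
      rw [insertIdx_succ_cons, idxOf_cons_ne _ (Ne.symm ha.1),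
        ih ha.2 (Nat.le_of_succ_le_succ hn)]

theorem insertIdx_idxOf_erase {l : List α} {a : α} (ha : a ∈ l) :
    (l.erase a).insertIdx (l.idxOf a) a = l := by
  have h := idxOf_lt_length_iff.mpr ha
  conv_rhs => rw [← insertIdx_eraseIdx_getElem h]
  rw [getElem_idxOf h, eraseIdx_idxOf_eq_erase]

end List

theorem mem_orderings_iff {S : Finset ℕ} {l : List ℕ} :
    l ∈ Orderings S ↔ l.Nodup ∧ l.toFinset = S := by
  rw [Orderings, List.mem_toFinset, List.mem_permutations]
  constructor
  · intro h
    exact ⟨h.nodup_iff.mpr (S.sort_nodup _), by rw [List.toFinset_eq_of_perm _ _ h, sort_toFinset]⟩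
  · rintro ⟨hl, rfl⟩
    exact List.perm_of_nodup_nodup_toFinset_eq hl (sort_nodup _ _) (sort_toFinset _ _).symm

theorem length_of_mem_orderings {S : Finset ℕ} {l : List ℕ} (h : l ∈ Orderings S) :
    l.length = S.card := by
  obtain ⟨hl, rfl⟩ := mem_orderings_iff.mp h
  exact (List.toFinset_card_of_nodup hl).symm

section Orderings

variable {S : Finset ℕ} {i : ℕ}

theorem insertIdx_mem_orderings_insert (hi : i ∉ S) {π : List ℕ} (hπ : π ∈ Orderings S)
    {k : ℕ} (hk : k ≤ S.card) : π.insertIdx k i ∈ Orderings (insert i S) := by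
  have hperm := List.perm_insertIdx i π (length_of_mem_orderings hπ ▸ hk)
  obtain ⟨hnd, rfl⟩ := mem_orderings_iff.mp hπ
  rw [mem_orderings_iff, hperm.nodup_iff, List.toFinset_eq_of_perm _ _ hperm,
    List.toFinset_cons, List.nodup_cons]
  exact ⟨⟨fun h => hi (List.mem_toFinset.mpr h), hnd⟩, rfl⟩

theorem erase_mem_orderings_of_mem_orderings_insert (hi : i ∉ S) {σ : List ℕ}
    (hσ : σ ∈ Orderings (insert i S)) : σ.erase i ∈ Orderings S := by
  obtain ⟨hnd, hσS⟩ := mem_orderings_iff.mp hσ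
  have hperm := List.perm_cons_erase (List.mem_toFinset.mp (hσS ▸ mem_insert_self i S))
  have hnd' := hperm.nodup_iff.mp hnd
  rw [List.nodup_cons, ← List.mem_toFinset] at hnd'
  refine mem_orderings_iff.mpr ⟨hnd'.2, ?_⟩
  rw [← erase_insert hnd'.1, ← List.toFinset_cons, ← List.toFinset_eq_of_perm _ _ hperm, hσS,
    erase_insert hi]

theorem sum_orderings_insert {β : Type*} [AddCommMonoid β] (hi : i ∉ S) (f : List ℕ → β) :
    ∑ π ∈ Orderings S, ∑ k ∈ range (S.card + 1), f (π.insertIdx k i) =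
      ∑ σ ∈ Orderings (insert i S), f σ := by
  rw [← sum_product']
  refine sum_nbij' (fun p => p.1.insertIdx p.2 i) (fun σ => (σ.erase i, σ.idxOf i))
    ?_ ?_ ?_ ?_ (fun _ _ => rfl)
  · rintro ⟨π, k⟩ hp
    rw [mem_product, mem_range] at hp
    exact insertIdx_mem_orderings_insert hi hp.1 (Nat.le_of_lt_succ hp.2)
  · intro σ hσ
    have hiσ : i ∈ σ := List.mem_toFinset.mp ((mem_orderings_iff.mp hσ).2 ▸ mem_insert_self i S)
    have hlen := length_of_mem_orderings hσ
    rw [card_insert_of_notMem hi] at hlen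
    rw [mem_product, mem_range, ← hlen, List.idxOf_lt_length_iff]
    exact ⟨erase_mem_orderings_of_mem_orderings_insert hi hσ, hiσ⟩
  · rintro ⟨π, k⟩ hp
    rw [mem_product, mem_range] at hp
    have hiπ : i ∉ π := fun h => hi ((mem_orderings_iff.mp hp.1).2 ▸ List.mem_toFinset.mpr h)
    have hk : k ≤ π.length := length_of_mem_orderings hp.1 ▸ Nat.le_of_lt_succ hp.2
    rw [List.idxOf_insertIdx_of_notMem hiπ hk, ← List.eraseIdx_idxOf_eq_erase,
      List.idxOf_insertIdx_of_notMem hiπ hk, List.eraseIdx_insertIdx_self]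
  · intro σ hσ
    exact List.insertIdx_idxOf_erase
      (List.mem_toFinset.mp ((mem_orderings_iff.mp hσ).2 ▸ mem_insert_self i S))

theorem sum_orderings_eq_factorial_mul_avgGame (ω : List ℕ → ℝ) (S : Finset ℕ) :
    ∑ π ∈ Orderings S, ω π = S.card ! * avgGame ω S := by
  rw [avgGame, ← mul_assoc, mul_one_div_cancel (by positivity), one_mul]

theorem sum_marginal_orderings (ω : List ℕ → ℝ) (hi : i ∉ S) :
    ∑ π ∈ Orderings S, ∑ k ∈ Icc 1 (S.card + 1), (ω (π.insertIdx (k - 1) i) - ω π) =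
      (S.card + 1)! * (avgGame ω (insert i S) - avgGame ω S) := by
  have hshift (π : List ℕ) : ∑ k ∈ Icc 1 (S.card + 1), (ω (π.insertIdx (k - 1) i) - ω π) =
      ∑ k ∈ range (S.card + 1), (ω (π.insertIdx k i) - ω π) := by
    rw [← Finset.Ico_add_one_right_eq_Icc, sum_Ico_eq_sum_range]
    simp
  simp only [hshift, sum_sub_distrib, sum_orderings_insert hi, sum_const, card_range, ← smul_sum,
    sum_orderings_eq_factorial_mul_avgGame, card_insert_of_notMem hi, factorial_succ]
  push_cast
  ring

end Orderings

theorem stmt4_general (d : ℕ) (ω : List ℕ → ℝ) (i : ℕ) :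
    SBvalue d ω i =
      ∑ S ∈ ((Finset.Icc 1 d).erase i).powerset,
        (((d - S.card - 1)! * S.card ! : ℝ) / d !) *
          (avgGame ω (insert i S) - avgGame ω S) := by
  refine sum_congr rfl fun S hS => ?_
  have hiS : i ∉ S := fun h => notMem_erase i _ (mem_powerset.mp hS h)
  simp_rw [← mul_sum]
  rw [sum_marginal_orderings ω hiS, factorial_succ]
  push_cast
  field_simp

/-- The SB value equals the Shapley value of the averaged game `ν̄`. -/
theorem stmt4 (d : ℕ) (ω : List ℕ → ℝ) (i : ℕ) (hi : i ∈ Finset.Icc 1 d) :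
    SBvalue d ω i =
      ∑ S ∈ ((Finset.Icc 1 d).erase i).powerset,
        (((d - S.card - 1)! * S.card ! : ℝ) / d !) *
          (avgGame ω (insert i S) - avgGame ω S) :=
  stmt4_general d ω i
end

section
/- Let N = {1,...,d} and suppose players i, j ∈ N are symmetric for a function ω on ordered coalitions, meaning ω(π with i inserted at position k) = ω(π with j inserted at position k) for all S ⊆ N\{i,j}, all orderings π of S, and all positions k. If additionally ω is invariant under swapping i and j within any ordering containing both, then φ^SB_i(ω) = φ^SB_j(ω). -/
/-!
Let `σ` be the transposition of `i` and `j`. Relabelling every ordering by `σ` carries the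
SB value of `i` for `ω ∘ map σ` onto the SB value of `σ i = j` for `ω`, so it suffices that
`ω ∘ map σ = ω` on orderings of subsets of `N`. An ordering containing both `i` and `j` is
covered by swap invariance, one containing neither is fixed by `σ`, and one containing exactly
one of them, say `i`, arises by inserting `i` into an ordering of a coalition avoiding `i` and
`j`, where symmetry allows inserting `j` instead.
-/

open Finset Nat

theorem Finset.map_swap_of_mem {α : Type*} [DecidableEq α] {s : Finset α} {i j : α}
    (hi : i ∈ s) (hj : j ∈ s) : s.map (Equiv.swap i j).toEmbedding = s := by
  ext a
  rw [Finset.mem_map_equiv, Equiv.symm_swap, Equiv.swap_apply_def]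
  split_ifs <;> simp [*]

theorem List.map_swap_eq_self {α : Type*} [DecidableEq α] {l : List α} {i j : α}
    (hi : i ∉ l) (hj : j ∉ l) : l.map (Equiv.swap i j) = l :=
  (List.map_congr_left fun _ ha => Equiv.swap_apply_of_ne_of_ne (ne_of_mem_of_not_mem ha hi)
    (ne_of_mem_of_not_mem ha hj)).trans (List.map_id l)

theorem List.insertIdx_erase_idxOf {α : Type*} [DecidableEq α] {l : List α} {a : α}
    (ha : a ∈ l) : (l.erase a).insertIdx (l.idxOf a) a = l := by
  have hlt := List.idxOf_lt_length_of_mem ha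
  conv_lhs => arg 3; rw [← List.getElem_idxOf hlt]
  rw [List.erase_eq_eraseIdx_of_idxOf rfl, List.insertIdx_eraseIdx_getElem hlt]

section Orderings

variable {S : Finset ℕ} {π : List ℕ}

theorem mem_orderings_iff_s8 : π ∈ Orderings S ↔ (π : Multiset ℕ) = S.val := by
  rw [Orderings, List.mem_toFinset, List.mem_permutations, ← Multiset.coe_eq_coe, Finset.sort_eq]

theorem length_eq_card_of_mem_orderings (h : π ∈ Orderings S) : π.length = S.card := by
  rw [← Multiset.coe_card, mem_orderings_iff_s8.1 h, Finset.card_val]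

theorem mem_of_mem_orderings (h : π ∈ Orderings S) {a : ℕ} : a ∈ π ↔ a ∈ S := by
  rw [← Multiset.mem_coe, mem_orderings_iff_s8.1 h, Finset.mem_val]

theorem nodup_of_mem_orderings (h : π ∈ Orderings S) : π.Nodup := by
  rw [← Multiset.coe_nodup, mem_orderings_iff_s8.1 h]
  exact S.nodup

theorem insertIdx_mem_orderings (h : π ∈ Orderings S) {a : ℕ} (ha : a ∉ S) {k : ℕ}
    (hk : k ≤ π.length) : π.insertIdx k a ∈ Orderings (insert a S) := by
  rw [mem_orderings_iff_s8, Multiset.coe_eq_coe.2 (List.perm_insertIdx a π hk),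
    Finset.insert_val_of_notMem ha, ← Multiset.cons_coe, mem_orderings_iff_s8.1 h]

theorem erase_mem_orderings (h : π ∈ Orderings S) (a : ℕ) :
    π.erase a ∈ Orderings (S.erase a) := by
  rw [mem_orderings_iff_s8, ← Multiset.coe_erase, mem_orderings_iff_s8.1 h, Finset.erase_val]

theorem map_mem_orderings_iff (σ : Equiv.Perm ℕ) :
    π.map σ ∈ Orderings (S.map σ.toEmbedding) ↔ π ∈ Orderings S := by
  rw [mem_orderings_iff_s8, mem_orderings_iff_s8, Finset.map_val, ← Multiset.map_coe]
  exact (Multiset.map_injective σ.injective).eq_iff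

end Orderings

theorem sbValue_congr {d i : ℕ} {ω ω' : List ℕ → ℝ} (hi : i ∈ Finset.Icc 1 d)
    (h : ∀ S ⊆ Finset.Icc 1 d, ∀ π ∈ Orderings S, ω π = ω' π) :
    SBvalue d ω i = SBvalue d ω' i := by
  refine Finset.sum_congr rfl fun S hS => Finset.sum_congr rfl fun π hπ =>
    Finset.sum_congr rfl fun k hk => ?_
  have hSN : S ⊆ Finset.Icc 1 d := (Finset.mem_powerset.1 hS).trans (Finset.erase_subset _ _)
  have hiS : i ∉ S := fun hiS => by simpa using Finset.mem_powerset.1 hS hiS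
  have hk' : k - 1 ≤ π.length := by
    rw [length_eq_card_of_mem_orderings hπ]
    have := Finset.mem_Icc.1 hk
    omega
  rw [h S hSN π hπ, h _ (Finset.insert_subset hi hSN) _ (insertIdx_mem_orderings hπ hiS hk')]

theorem sbValue_map_perm {d : ℕ} (ω : List ℕ → ℝ) (i : ℕ) (σ : Equiv.Perm ℕ)
    (hσ : (Finset.Icc 1 d).map σ.toEmbedding = Finset.Icc 1 d) :
    SBvalue d ω (σ i) = SBvalue d (fun π => ω (π.map σ)) i := by
  symm
  refine Finset.sum_equiv σ.finsetCongr (fun S => ?_) fun S _ => ?_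
  · rw [Equiv.finsetCongr_apply, Finset.mem_powerset, Finset.mem_powerset,
      ← Finset.map_subset_map (f := σ.toEmbedding), Finset.map_erase, hσ]
    rfl
  refine Finset.sum_equiv (Equiv.listEquivOfEquiv σ) (fun π => (map_mem_orderings_iff σ).symm)
    fun π _ => ?_
  simp only [Equiv.finsetCongr_apply, Finset.card_map, Equiv.listEquivOfEquiv, Equiv.coe_fn_mk,
    List.map_insertIdx]

def SymmetricPlayers (d : ℕ) (ω : List ℕ → ℝ) (i j : ℕ) : Prop :=
  ∀ S ⊆ ((Finset.Icc 1 d).erase i).erase j, ∀ π ∈ Orderings S,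
    ∀ k ∈ Finset.Icc 1 (S.card + 1), ω (π.insertIdx (k - 1) i) = ω (π.insertIdx (k - 1) j)

section

variable {d i j : ℕ} {ω : List ℕ → ℝ}

theorem map_swap_eq_of_mem_of_notMem (hsym : SymmetricPlayers d ω i j) {S : Finset ℕ}
    (hS : S ⊆ Finset.Icc 1 d) {π : List ℕ} (hπ : π ∈ Orderings S) (hiπ : i ∈ π) (hjπ : j ∉ π) :
    ω (π.map (Equiv.swap i j)) = ω π := by
  set τ := π.erase i
  set n := π.idxOf i
  have hτ : τ ∈ Orderings (S.erase i) := erase_mem_orderings hπ i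
  have hτ_fixed : τ.map (Equiv.swap i j) = τ :=
    List.map_swap_eq_self ((nodup_of_mem_orderings hπ).not_mem_erase)
      fun h => hjπ (List.mem_of_mem_erase h)
  have hsub : S.erase i ⊆ ((Finset.Icc 1 d).erase i).erase j := by
    have hjS : j ∉ S := fun h => hjπ ((mem_of_mem_orderings hπ).2 h)
    intro a ha
    rw [Finset.mem_erase] at ha ⊢
    exact ⟨fun h => hjS (h ▸ ha.2), Finset.mem_erase.2 ⟨ha.1, hS ha.2⟩⟩
  have hn : n + 1 ∈ Finset.Icc 1 ((S.erase i).card + 1) := by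
    have := List.idxOf_lt_length_of_mem hiπ
    rw [length_eq_card_of_mem_orderings hπ] at this
    rw [Finset.mem_Icc, Finset.card_erase_of_mem ((mem_of_mem_orderings hπ).1 hiπ)]
    omega
  have hsym_τ := hsym _ hsub τ hτ (n + 1) hn
  rw [Nat.add_sub_cancel] at hsym_τ
  calc ω (π.map (Equiv.swap i j))
      _ = ω ((τ.insertIdx n i).map (Equiv.swap i j)) := by rw [List.insertIdx_erase_idxOf hiπ]
      _ = ω (τ.insertIdx n j) := by rw [List.map_insertIdx, hτ_fixed, Equiv.swap_apply_left]
      _ = ω π := by rw [← hsym_τ, List.insertIdx_erase_idxOf hiπ]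

theorem map_swap_eq (hsym : SymmetricPlayers d ω i j)
    (hswap : ∀ π : List ℕ, i ∈ π → j ∈ π → ω (π.map (Equiv.swap i j)) = ω π)
    (hi : i ∈ Finset.Icc 1 d) (hj : j ∈ Finset.Icc 1 d)
    {S : Finset ℕ} (hS : S ⊆ Finset.Icc 1 d) {π : List ℕ} (hπ : π ∈ Orderings S) :
    ω (π.map (Equiv.swap i j)) = ω π := by
  by_cases hiπ : i ∈ π <;> by_cases hjπ : j ∈ π
  · exact hswap π hiπ hjπ
  · exact map_swap_eq_of_mem_of_notMem hsym hS hπ hiπ hjπ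
  · -- apply the previous case to the swapped ordering, which contains `i` but not `j`
    have hρ : π.map (Equiv.swap i j) ∈ Orderings (S.map (Equiv.swap i j).toEmbedding) :=
      (map_mem_orderings_iff _).2 hπ
    have hρS : S.map (Equiv.swap i j).toEmbedding ⊆ Finset.Icc 1 d := by
      rw [← Finset.map_swap_of_mem hi hj]
      exact Finset.map_subset_map.2 hS
    have hiρ : i ∈ π.map (Equiv.swap i j) := List.mem_map.2 ⟨j, hjπ, Equiv.swap_apply_right i j⟩
    have hjρ : j ∉ π.map (Equiv.swap i j) := fun h => by
      obtain ⟨a, ha, hσa⟩ := List.mem_map.1 h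
      rw [Equiv.swap_apply_eq_iff, Equiv.swap_apply_right] at hσa
      exact hiπ (hσa ▸ ha)
    have := map_swap_eq_of_mem_of_notMem hsym hρS hρ hiρ hjρ
    rwa [List.map_map, ← Equiv.coe_trans, Equiv.swap_swap, Equiv.coe_refl, List.map_id, eq_comm]
      at this
  · rw [List.map_swap_eq_self hiπ hjπ]

end

theorem stmt8_general (d i j : ℕ) (ω : List ℕ → ℝ)
    (hi : i ∈ Finset.Icc 1 d) (hj : j ∈ Finset.Icc 1 d)
    (hsym : ∀ S ⊆ ((Finset.Icc 1 d).erase i).erase j, ∀ π ∈ Orderings S,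
      ∀ k ∈ Finset.Icc 1 (S.card + 1),
        ω (π.insertIdx (k - 1) i) = ω (π.insertIdx (k - 1) j))
    (hswap : ∀ π : List ℕ, i ∈ π → j ∈ π →
      ω (π.map (fun a => if a = i then j else if a = j then i else a)) = ω π) :
    SBvalue d ω i = SBvalue d ω j := by
  have hswap' : ∀ π : List ℕ, i ∈ π → j ∈ π → ω (π.map (Equiv.swap i j)) = ω π := by
    simpa only [← Equiv.swap_apply_def] using hswap
  calc SBvalue d ω i
      _ = SBvalue d (fun π => ω (π.map (Equiv.swap i j))) i :=
        sbValue_congr hi fun S hS π hπ => (map_swap_eq hsym hswap' hi hj hS hπ).symm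
      _ = SBvalue d ω j := by
        rw [← sbValue_map_perm ω i _ (Finset.map_swap_of_mem hi hj), Equiv.swap_apply_left]

/-- Symmetric players have equal SB values. -/
theorem stmt8 (d i j : ℕ) (ω : List ℕ → ℝ)
    (hi : i ∈ Finset.Icc 1 d) (hj : j ∈ Finset.Icc 1 d) (hij : i ≠ j)
    (hsym : ∀ S ⊆ ((Finset.Icc 1 d).erase i).erase j, ∀ π ∈ Orderings S,
      ∀ k ∈ Finset.Icc 1 (S.card + 1),
        ω (π.insertIdx (k - 1) i) = ω (π.insertIdx (k - 1) j))
    (hswap : ∀ π : List ℕ, i ∈ π → j ∈ π →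
      ω (π.map (fun a => if a = i then j else if a = j then i else a)) = ω π) :
    SBvalue d ω i = SBvalue d ω j :=
  stmt8_general d i j ω hi hj hsym hswap
end
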